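/- arXiv:2503.10172 — 7 statements merged into one kernel-verified Lean document; each statement's English description precedes it below -/
import Mathlib

section
/- Suppose $f : \mathcal{D} \to \mathbb{R}^m$ satisfies the local tangential cone condition with constant $\xi < 1$ on $\mathcal{D}$, and $x_*, \bar{x}_* \in \mathcal{D}$ are both solutions of $f(x) = 0$. Then $x_* - \bar{x}_* \in \mathcal{N}(f'(x_*))$, the null space of the Jacobian at $x_*$. -/
/-- Under the local tangential cone condition with constant `ξ < 1`, any two
solutions `x*, x̄*` of `f(x)=0` in `D` satisfy `x* - x̄* ∈ N(f'(x*))`. -/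
theorem stmt_3 {n m : ℕ} (D : Set (Fin n → ℝ))
    (f : (Fin n → ℝ) → Fin m → ℝ)
    (J : (Fin n → ℝ) → Matrix (Fin m) (Fin n) ℝ)
    (hdiff : ∀ x ∈ D, HasFDerivAt f (Matrix.mulVecLin (J x)).toContinuousLinearMap x)
    (ξ : ℝ) (hξ0 : 0 ≤ ξ) (hξ : ξ < 1)
    (hcone : ∀ x1 ∈ D, ∀ x2 ∈ D, ∀ i : Fin m,
      |f x1 i - f x2 i - (J x1).mulVec (x1 - x2) i| ≤ ξ * |f x1 i - f x2 i|)
    (xs xbs : Fin n → ℝ) (hxs : xs ∈ D) (hxbs : xbs ∈ D)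
    (hfs : f xs = 0) (hfbs : f xbs = 0) :
    xs - xbs ∈ LinearMap.ker (Matrix.mulVecLin (J xs)) := by
  rw [LinearMap.mem_ker]
  funext i
  have h := hcone xs hxs xbs hxbs i
  simp only [hfs, hfbs, Pi.zero_apply, sub_self, zero_sub, abs_neg, mul_zero, abs_zero] at h
  have : |(J xs).mulVec (xs - xbs) i| = 0 := le_antisymm h (abs_nonneg _)
  simpa [Matrix.mulVecLin] using abs_eq_zero.mp this
end

section
/- Let $J \in \mathbb{R}^{t \times n}$ be a matrix with rows $J_i$ satisfying $\|J_i\|_2^2 \le \alpha$ for all $i$, let $v \in \mathbb{R}^t$, and let $q \ge 2$ be an integer. Define $\eta \in \mathbb{R}^t$ by $\eta_i = v_i^{q-1}$ if $q$ is even and $\eta_i = |v_i|^{q-2} v_i$ if $q$ is odd. If $J^T \eta \ne 0$, then $\frac{\|v\|_q^{2q}}{\|J^T \eta\|_2^2} \ge \frac{t^{1-q}}{\alpha} \|v\|_2^2$. -/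
/-- Key estimate `‖v‖_q^{2q} / ‖Jᵀη‖² ≥ (t^{1-q}/α) ‖v‖₂²` for the
residual-based weight vector `η`. -/
theorem stmt_7 {t n : ℕ} (ht : 0 < t) (J : Matrix (Fin t) (Fin n) ℝ)
    (α : ℝ) (hα : 0 < α) (hrows : ∀ i : Fin t, ∑ j, J i j ^ 2 ≤ α)
    (v : Fin t → ℝ) (q : ℕ) (hq : 2 ≤ q) (η : Fin t → ℝ)
    (hη : ∀ i, η i = if Even q then v i ^ (q - 1) else |v i| ^ (q - 2) * v i)
    (hne : J.transpose.mulVec η ≠ 0) :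
    (∑ i, |v i| ^ q) ^ 2 / (∑ j, (J.transpose.mulVec η j) ^ 2) ≥
      (t : ℝ) ^ ((1 : ℤ) - (q : ℤ)) / α * ∑ i, v i ^ 2 := by
  set a : Fin t → ℝ := fun i => |v i| with ha
  set A : ℝ := ∑ i, a i ^ q with hA
  set E : ℝ := ∑ i, a i ^ (2 * q - 2) with hE
  set S : ℝ := ∑ i, v i ^ 2 with hS
  set w : Fin n → ℝ := J.transpose.mulVec η with hw
  set B : ℝ := ∑ j, w j ^ 2 with hB
  have ht0 : (t : ℝ) ≠ 0 := Nat.cast_ne_zero.mpr ht.ne'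
  have ht1 : (1 : ℝ) ≤ t := Nat.one_le_cast.mpr ht
  -- η i ^ 2 = |v i| ^ (2q - 2)
  have hηsq : ∀ i, η i ^ 2 = a i ^ (2 * q - 2) := by
    intro i
    rcases Nat.even_or_odd q with h | h
    · rw [hη i, if_pos h, ← pow_mul, show (q - 1) * 2 = 2 * q - 2 by omega,
        Even.pow_abs ⟨q - 1, by omega⟩]
    · rw [hη i, if_neg (Nat.not_even_iff_odd.mpr h), mul_pow, ← pow_mul, ← sq_abs (v i)]
      rw [← pow_add]
      congr 1; omega
  -- B ≤ t * α * E
  have hBle : B ≤ (t : ℝ) * α * E := by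
    have hstep : ∀ j, w j ^ 2 ≤ (∑ i, J i j ^ 2) * E := by
      intro j
      have : w j = ∑ i, J i j * η i := by
        simp [hw, Matrix.mulVec, Matrix.transpose, dotProduct]
      rw [this]
      calc (∑ i, J i j * η i) ^ 2 ≤ (∑ i, J i j ^ 2) * ∑ i, η i ^ 2 :=
            Finset.sum_mul_sq_le_sq_mul_sq _ _ _
        _ = (∑ i, J i j ^ 2) * E := by rw [hE]; congr 1; exact Finset.sum_congr rfl fun i _ => hηsq i
    calc B ≤ ∑ j, (∑ i, J i j ^ 2) * E := Finset.sum_le_sum fun j _ => hstep j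
      _ = (∑ j, ∑ i, J i j ^ 2) * E := by rw [Finset.sum_mul]
      _ = (∑ i, ∑ j, J i j ^ 2) * E := by rw [Finset.sum_comm]
      _ ≤ ((t : ℝ) * α) * E := by
          have hEnn : 0 ≤ E := Finset.sum_nonneg fun i _ => by positivity
          have : (∑ i : Fin t, ∑ j, J i j ^ 2) ≤ (t : ℝ) * α := by
            calc (∑ i : Fin t, ∑ j, J i j ^ 2) ≤ ∑ _i : Fin t, α :=
                  Finset.sum_le_sum fun i _ => hrows i
              _ = (t : ℝ) * α := by simp [mul_comm]
          exact mul_le_mul_of_nonneg_right this hEnn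
  -- E * S ≤ t ^ (q - 2) * A ^ 2
  have hES : E * S ≤ (t : ℝ) ^ (q - 2) * A ^ 2 := by
    have hSa : S = ∑ i, a i ^ 2 := by
      simp [hS, ha, sq_abs]
    have hsum_sq : ∑ i, (a i ^ q) ^ 2 ≤ A ^ 2 :=
      Finset.sum_sq_le_sq_sum_of_nonneg fun i _ => by positivity
    rcases eq_or_lt_of_le hq with hq2 | hq3
    · -- q = 2
      subst hq2
      have hES : E = S := by rw [hE, hSa]
      have hSA : S = A := by rw [hSa, hA]
      rw [hES, hSA]
      simp [sq]
    · -- q ≥ 3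
      have hmono : Monovary (fun i => a i ^ (2 * q - 2)) (fun i => a i ^ 2) := by
        intro i j hij
        have hlt : a i < a j := lt_of_pow_lt_pow_left₀ 2 (abs_nonneg _) hij
        exact pow_le_pow_left₀ (abs_nonneg _) hlt.le _
      have hcheb : E * S ≤ (t : ℝ) * ∑ i, a i ^ (2 * q - 2) * a i ^ 2 := by
        rw [hSa]
        have := hmono.sum_mul_sum_le_card_mul_sum
        simpa [Fintype.card_fin] using this
      have heq : ∀ i, a i ^ (2 * q - 2) * a i ^ 2 = (a i ^ q) ^ 2 := by
        intro i
        rw [← pow_mul, ← pow_add]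
        congr 1; omega
      calc E * S ≤ (t : ℝ) * ∑ i, a i ^ (2 * q - 2) * a i ^ 2 := hcheb
        _ = (t : ℝ) * ∑ i, (a i ^ q) ^ 2 := by
            congr 1; exact Finset.sum_congr rfl fun i _ => heq i
        _ ≤ (t : ℝ) * A ^ 2 := by
            exact mul_le_mul_of_nonneg_left hsum_sq (by positivity)
        _ ≤ (t : ℝ) ^ (q - 2) * A ^ 2 := by
            have : (t : ℝ) = (t : ℝ) ^ 1 := (pow_one _).symm
            have h1 : (t : ℝ) ^ 1 ≤ (t : ℝ) ^ (q - 2) :=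
              pow_le_pow_right₀ ht1 (by omega)
            nlinarith [sq_nonneg A]
  -- positivity of B and E
  have hBpos : 0 < B := by
    obtain ⟨j, hj⟩ := Function.ne_iff.mp hne
    exact Finset.sum_pos' (fun _ _ => sq_nonneg _) ⟨j, Finset.mem_univ j, lt_of_le_of_ne (sq_nonneg _) (Ne.symm (pow_ne_zero 2 hj))⟩
  have hEpos : 0 < E := by
    by_contra h
    push_neg at h
    have hEnn : 0 ≤ E := Finset.sum_nonneg fun i _ => by positivity
    have hE0 : E = 0 := le_antisymm h hEnn
    have : B ≤ 0 := by rw [hE0] at hBle; simpa using hBle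
    linarith
  -- combine
  have h1 : A ^ 2 / ((t : ℝ) * α * E) ≤ A ^ 2 / B :=
    div_le_div_of_nonneg_left (sq_nonneg A) hBpos hBle
  have h2 : (t : ℝ) ^ ((1 : ℤ) - (q : ℤ)) / α * S ≤ A ^ 2 / ((t : ℝ) * α * E) := by
    rw [le_div_iff₀ (by positivity : (0:ℝ) < (t : ℝ) * α * E)]
    have hcast : ((t : ℝ) ^ (q - 2) : ℝ) = (t : ℝ) ^ ((q : ℤ) - 2) := by
      rw [← zpow_natCast]
      congr 1; omega
    have hkey : (t : ℝ) ^ ((1 : ℤ) - (q : ℤ)) / α * S * ((t : ℝ) * α * E)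
        = (t : ℝ) ^ ((2 : ℤ) - (q : ℤ)) * (E * S) := by
      have : (t : ℝ) ^ ((1 : ℤ) - (q : ℤ)) * (t : ℝ) = (t : ℝ) ^ ((2 : ℤ) - (q : ℤ)) := by
        rw [show ((2:ℤ) - (q:ℤ)) = (1 - (q:ℤ)) + 1 by ring, zpow_add_one₀ ht0]
      field_simp
      rw [← this]
      ring
    rw [hkey]
    calc (t : ℝ) ^ ((2 : ℤ) - (q : ℤ)) * (E * S)
        ≤ (t : ℝ) ^ ((2 : ℤ) - (q : ℤ)) * ((t : ℝ) ^ (q - 2) * A ^ 2) := by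
          exact mul_le_mul_of_nonneg_left hES (by positivity)
      _ = A ^ 2 := by
          rw [hcast, ← mul_assoc, ← zpow_add₀ ht0]
          norm_num
  exact le_trans h2 h1
end

section
/- Suppose $f$ satisfies the local tangential cone condition with constant $\xi \le 1/2$ on $\mathcal{D}$, $f(x^\dagger) = 0$, and $x_k \in \mathcal{D}$. For an index set $\tau_k$ and weight vector $\eta_k$ with $\eta_k^{(i)} = f_i^{q-1}(x_k)$ ($q$ even) or $|f_i(x_k)|^{q-2} f_i(x_k)$ ($q$ odd), assuming $(f'_{\tau_k}(x_k))^T \eta_k \ne 0$, the projection step satisfies $\left\| x_k - \frac{\eta_k^T f_{\tau_k}(x_k)}{\|(f'_{\tau_k}(x_k))^T \eta_k\|^2} (f'_{\tau_k}(x_k))^T \eta_k - x^\dagger \right\|^2 \le \|x_k - x^\dagger\|^2 - (1 - 2\xi) \frac{|\eta_k^T f_{\tau_k}(x_k)|^2}{\|(f'_{\tau_k}(x_k))^T \eta_k\|^2}$. -/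
/-- Algebraic one-step contraction lemma. -/
lemma aux_step_12 {n : ℕ} (a v : Fin n → ℝ) (β ξ : ℝ)
    (hS : 0 < ∑ j', v j' ^ 2)
    (hkey : (1 - ξ) * β ^ 2 ≤ β * ∑ j, v j * a j) :
    ∑ j, (a j - β / (∑ j', v j' ^ 2) * v j) ^ 2 ≤
      (∑ j, a j ^ 2) - (1 - 2 * ξ) * β ^ 2 / (∑ j', v j' ^ 2) := by
  set S := ∑ j' : Fin n, v j' ^ 2 with hSdef
  set P := ∑ j : Fin n, v j * a j with hPdef
  have hexp : ∑ j, (a j - β / S * v j) ^ 2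
      = (∑ j, a j ^ 2) - 2 * (β / S) * P + (β / S) ^ 2 * S := by
    rw [hPdef, hSdef, Finset.mul_sum, Finset.mul_sum, ← Finset.sum_sub_distrib,
      ← Finset.sum_add_distrib]
    exact Finset.sum_congr rfl fun j _ => by ring
  rw [hexp]
  have h1 : (β / S) ^ 2 * S = β ^ 2 / S := by field_simp
  have h2 : 2 * (β / S) * P = 2 * β * P / S := by ring
  rw [h1, h2]
  have h3 : (1 - 2 * ξ) * β ^ 2 ≤ 2 * β * P - β ^ 2 := by nlinarith
  have h4 : (1 - 2 * ξ) * β ^ 2 / S ≤ (2 * β * P - β ^ 2) / S := by gcongr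
  have h5 : (2 * β * P - β ^ 2) / S = 2 * β * P / S - β ^ 2 / S := sub_div _ _ _
  linarith [h4, h5.le, h5.ge]

/-- One-step contraction of the weighted projection: under the tangential cone
condition with `ξ ≤ 1/2` and `f(x†) = 0`,
`‖x_k - (η^T f_τ(x_k)/‖f_τ'(x_k)^T η‖²) f_τ'(x_k)^T η - x†‖² ≤ ‖x_k - x†‖² - (1-2ξ)|η^T f_τ(x_k)|²/‖f_τ'(x_k)^T η‖²`. -/
theorem stmt_12 {n m : ℕ} (D : Set (Fin n → ℝ))
    (f : (Fin n → ℝ) → Fin m → ℝ)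
    (J : (Fin n → ℝ) → Matrix (Fin m) (Fin n) ℝ)
    (hdiff : ∀ x ∈ D, HasFDerivAt f (Matrix.mulVecLin (J x)).toContinuousLinearMap x)
    (ξ : ℝ) (hξ0 : 0 ≤ ξ) (hξ : ξ ≤ 1 / 2)
    (hcone : ∀ x1 ∈ D, ∀ x2 ∈ D, ∀ i : Fin m,
      |f x1 i - f x2 i - (J x1).mulVec (x1 - x2) i| ≤ ξ * |f x1 i - f x2 i|)
    (xdag : Fin n → ℝ) (hxdag : xdag ∈ D) (hfdag : f xdag = 0)
    (xk : Fin n → ℝ) (hxk : xk ∈ D)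
    (q : ℕ) (hq : 2 ≤ q) (τ : Finset (Fin m)) (η : Fin m → ℝ)
    (hη : ∀ i ∈ τ, η i =
      if Even q then f xk i ^ (q - 1) else |f xk i| ^ (q - 2) * f xk i)
    (hne : (fun j => ∑ i ∈ τ, η i * J xk i j) ≠ 0) :
    ∑ j, (xk j - (∑ i ∈ τ, η i * f xk i) /
          (∑ j', (∑ i ∈ τ, η i * J xk i j') ^ 2) * (∑ i ∈ τ, η i * J xk i j)
          - xdag j) ^ 2 ≤
      (∑ j, (xk j - xdag j) ^ 2) -
        (1 - 2 * ξ) * (∑ i ∈ τ, η i * f xk i) ^ 2 /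
          (∑ j', (∑ i ∈ τ, η i * J xk i j') ^ 2) := by
  have hS : 0 < ∑ j', (∑ i ∈ τ, η i * J xk i j') ^ 2 := by
    rcases Function.ne_iff.mp hne with ⟨j, hj⟩
    refine Finset.sum_pos' (fun j _ => sq_nonneg _) ⟨j, Finset.mem_univ j, ?_⟩
    have : (∑ i ∈ τ, η i * J xk i j) ≠ 0 := by simpa using hj
    positivity
  -- pointwise facts about η
  have hηf : ∀ i ∈ τ, η i * f xk i = |f xk i| ^ q := by
    intro i hi
    rw [hη i hi]
    split_ifs with h
    · rw [← pow_succ, Nat.sub_add_cancel (by omega : 1 ≤ q), h.pow_abs]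
    · rw [mul_assoc, ← sq, ← sq_abs, ← pow_add, Nat.sub_add_cancel hq]
  have hηabs : ∀ i ∈ τ, |η i| = |f xk i| ^ (q - 1) := by
    intro i hi
    rw [hη i hi]
    split_ifs with h
    · exact abs_pow _ _
    · rw [abs_mul, abs_pow, abs_abs, ← pow_succ]
      congr 1
      omega
  have hβ : (∑ i ∈ τ, η i * f xk i) = ∑ i ∈ τ, |f xk i| ^ q :=
    Finset.sum_congr rfl hηf
  have hβ0 : 0 ≤ ∑ i ∈ τ, η i * f xk i := by
    rw [hβ]; exact Finset.sum_nonneg fun i _ => by positivity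
  -- cone condition at (xk, xdag)
  have he : ∀ i, |f xk i - (J xk).mulVec (xk - xdag) i| ≤ ξ * |f xk i| := by
    intro i
    have h := hcone xk hxk xdag hxdag i
    simpa [hfdag] using h
  -- inner product identity
  have hswap : (∑ j, (∑ i ∈ τ, η i * J xk i j) * (xk j - xdag j))
      = ∑ i ∈ τ, η i * (J xk).mulVec (xk - xdag) i := by
    simp_rw [Finset.sum_mul]
    rw [Finset.sum_comm]
    refine Finset.sum_congr rfl fun i _ => ?_
    simp only [Matrix.mulVec, dotProduct, Pi.sub_apply, Finset.mul_sum]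
    exact Finset.sum_congr rfl fun j _ => by ring
  -- key inequality
  have hkey : (1 - ξ) * (∑ i ∈ τ, η i * f xk i) ^ 2 ≤
      (∑ i ∈ τ, η i * f xk i) *
        ∑ j, (∑ i ∈ τ, η i * J xk i j) * (xk j - xdag j) := by
    rw [hswap]
    have hEbound : |∑ i ∈ τ, η i * (f xk i - (J xk).mulVec (xk - xdag) i)| ≤
        ξ * ∑ i ∈ τ, η i * f xk i := by
      calc |∑ i ∈ τ, η i * (f xk i - (J xk).mulVec (xk - xdag) i)|
          ≤ ∑ i ∈ τ, |η i * (f xk i - (J xk).mulVec (xk - xdag) i)| :=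
            Finset.abs_sum_le_sum_abs _ _
        _ ≤ ∑ i ∈ τ, ξ * |f xk i| ^ q := by
            refine Finset.sum_le_sum fun i hi => ?_
            rw [abs_mul, hηabs i hi]
            calc |f xk i| ^ (q - 1) * |f xk i - (J xk).mulVec (xk - xdag) i|
                ≤ |f xk i| ^ (q - 1) * (ξ * |f xk i|) :=
                  mul_le_mul_of_nonneg_left (he i) (by positivity)
              _ = ξ * |f xk i| ^ q := by
                  rw [mul_comm ξ, ← mul_assoc, ← pow_succ,
                    Nat.sub_add_cancel (by omega : 1 ≤ q)]; ring
        _ = ξ * ∑ i ∈ τ, η i * f xk i := by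
            rw [Finset.mul_sum]
            exact Finset.sum_congr rfl fun i hi => by rw [hηf i hi]
    have hsplit : (∑ i ∈ τ, η i * (J xk).mulVec (xk - xdag) i)
        = (∑ i ∈ τ, η i * f xk i) -
            ∑ i ∈ τ, η i * (f xk i - (J xk).mulVec (xk - xdag) i) := by
      rw [← Finset.sum_sub_distrib]
      exact Finset.sum_congr rfl fun i _ => by ring
    rw [hsplit]
    have h1 : (∑ i ∈ τ, η i * (f xk i - (J xk).mulVec (xk - xdag) i)) ≤
        ξ * ∑ i ∈ τ, η i * f xk i := le_trans (le_abs_self _) hEbound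
    nlinarith [mul_le_mul_of_nonneg_left h1 hβ0]
  have haux := aux_step_12 (fun j => xk j - xdag j)
    (fun j => ∑ i ∈ τ, η i * J xk i j)
    (∑ i ∈ τ, η i * f xk i) ξ hS (by simpa using hkey)
  calc ∑ j, (xk j - (∑ i ∈ τ, η i * f xk i) /
          (∑ j', (∑ i ∈ τ, η i * J xk i j') ^ 2) * (∑ i ∈ τ, η i * J xk i j)
          - xdag j) ^ 2
      = ∑ j, ((xk j - xdag j) - (∑ i ∈ τ, η i * f xk i) /
          (∑ j', (∑ i ∈ τ, η i * J xk i j') ^ 2) * (∑ i ∈ τ, η i * J xk i j)) ^ 2 :=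
        Finset.sum_congr rfl fun j _ => by ring
    _ ≤ (∑ j, (xk j - xdag j) ^ 2) -
        (1 - 2 * ξ) * (∑ i ∈ τ, η i * f xk i) ^ 2 /
          (∑ j', (∑ i ∈ τ, η i * J xk i j') ^ 2) := haux
end

section
/- Under the local tangential cone condition with constant $\xi$ and $f(x^\dagger) = 0$, with $\eta_k$ defined as in the RBWNK method and $P(x_k) = \frac{\eta_k^T f_{\tau_k}(x_k)}{\|(f'_{\tau_k}(x_k))^T \eta_k\|^2} (f'_{\tau_k}(x_k))^T \eta_k$, the cross term satisfies $-4\langle x_k - x^\dagger, P(x_k) \rangle \le -4(1-\xi) \frac{\|f_{\tau_k}(x_k)\|_q^{2q}}{\|(f'_{\tau_k}(x_k))^T \eta_k\|^2}$. -/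
/-- Cross-term bound: with `P(x_k)` the weighted projection direction,
`-4⟨x_k - x†, P(x_k)⟩ ≤ -4(1-ξ) ‖f_τ(x_k)‖_q^{2q} / ‖f_τ'(x_k)^T η‖²`,
where `‖f_τ(x_k)‖_q^{2q} = (∑_{i∈τ} |f_i(x_k)|^q)²`. -/
theorem stmt_13 {n m : ℕ} (D : Set (Fin n → ℝ))
    (f : (Fin n → ℝ) → Fin m → ℝ)
    (J : (Fin n → ℝ) → Matrix (Fin m) (Fin n) ℝ)
    (hdiff : ∀ x ∈ D, HasFDerivAt f (Matrix.mulVecLin (J x)).toContinuousLinearMap x)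
    (ξ : ℝ) (hξ0 : 0 ≤ ξ)
    (hcone : ∀ x1 ∈ D, ∀ x2 ∈ D, ∀ i : Fin m,
      |f x1 i - f x2 i - (J x1).mulVec (x1 - x2) i| ≤ ξ * |f x1 i - f x2 i|)
    (xdag : Fin n → ℝ) (hxdag : xdag ∈ D) (hfdag : f xdag = 0)
    (xk : Fin n → ℝ) (hxk : xk ∈ D)
    (q : ℕ) (hq : 2 ≤ q) (τ : Finset (Fin m)) (η : Fin m → ℝ)
    (hη : ∀ i ∈ τ, η i =
      if Even q then f xk i ^ (q - 1) else |f xk i| ^ (q - 2) * f xk i)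
    (hne : (fun j => ∑ i ∈ τ, η i * J xk i j) ≠ 0) :
    -4 * ∑ j, (xk j - xdag j) *
        ((∑ i ∈ τ, η i * f xk i) / (∑ j', (∑ i ∈ τ, η i * J xk i j') ^ 2) *
          (∑ i ∈ τ, η i * J xk i j)) ≤
      -4 * (1 - ξ) * (∑ i ∈ τ, |f xk i| ^ q) ^ 2 /
        (∑ j', (∑ i ∈ τ, η i * J xk i j') ^ 2) := by
  set N : ℝ := ∑ i ∈ τ, |f xk i| ^ q with hN
  set S : ℝ := ∑ j', (∑ i ∈ τ, η i * J xk i j') ^ 2 with hS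
  set T : ℝ := ∑ i ∈ τ, η i * ((J xk).mulVec (xk - xdag) i) with hT
  -- S > 0
  have hSpos : 0 < S := by
    obtain ⟨j, hj⟩ : ∃ j, (∑ i ∈ τ, η i * J xk i j) ≠ 0 := by
      by_contra h
      push_neg at h
      exact hne (funext h)
    have h1 : 0 < (∑ i ∈ τ, η i * J xk i j) ^ 2 := by positivity
    calc 0 < (∑ i ∈ τ, η i * J xk i j) ^ 2 := h1
      _ ≤ S := Finset.single_le_sum (f := fun j' => (∑ i ∈ τ, η i * J xk i j') ^ 2)
          (fun _ _ => by positivity) (Finset.mem_univ j)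
  -- η i * f xk i = |f xk i| ^ q for i ∈ τ
  have hηf : ∀ i ∈ τ, η i * f xk i = |f xk i| ^ q := by
    intro i hi
    rw [hη i hi]
    by_cases hev : Even q
    · rw [if_pos hev, ← pow_succ, Nat.sub_add_cancel (by omega)]
      exact (hev.pow_abs _).symm
    · rw [if_neg hev, mul_assoc, ← abs_mul_abs_self, ← pow_two, ← pow_add,
        Nat.sub_add_cancel hq]
  -- |η i| = |f xk i| ^ (q - 1) for i ∈ τ
  have hηabs : ∀ i ∈ τ, |η i| = |f xk i| ^ (q - 1) := by
    intro i hi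
    rw [hη i hi]
    by_cases hev : Even q
    · rw [if_pos hev, abs_pow]
    · rw [if_neg hev, abs_mul, abs_pow, abs_abs, ← pow_succ]
      congr 1
      omega
  -- key estimate: T ≥ (1-ξ) * N
  have hkey : (1 - ξ) * N ≤ T := by
    rw [hT, hN, Finset.mul_sum]
    apply Finset.sum_le_sum
    intro i hi
    have hc := hcone xk hxk xdag hxdag i
    rw [hfdag] at hc
    simp only [Pi.zero_apply, sub_zero] at hc
    have h1 : η i * ((J xk).mulVec (xk - xdag) i)
        = η i * f xk i - η i * (f xk i - (J xk).mulVec (xk - xdag) i) := by ring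
    have h2 : η i * (f xk i - (J xk).mulVec (xk - xdag) i) ≤ ξ * |f xk i| ^ q := by
      calc η i * (f xk i - (J xk).mulVec (xk - xdag) i)
          ≤ |η i * (f xk i - (J xk).mulVec (xk - xdag) i)| := le_abs_self _
        _ = |η i| * |f xk i - (J xk).mulVec (xk - xdag) i| := abs_mul _ _
        _ ≤ |η i| * (ξ * |f xk i|) := by
            apply mul_le_mul_of_nonneg_left hc (abs_nonneg _)
        _ = ξ * (|f xk i| ^ (q - 1) * |f xk i|) := by rw [hηabs i hi]; ring
        _ = ξ * |f xk i| ^ q := by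
            rw [← pow_succ]
            congr 2
            omega
    rw [h1, hηf i hi]
    linarith
  -- N ≥ 0
  have hN0 : 0 ≤ N := Finset.sum_nonneg fun i _ => by positivity
  -- rewrite LHS
  have hNf : (∑ i ∈ τ, η i * f xk i) = N := Finset.sum_congr rfl hηf
  have hTj : T = ∑ j, (xk j - xdag j) * ∑ i ∈ τ, η i * J xk i j := by
    rw [hT]
    simp only [Matrix.mulVec, dotProduct, Pi.sub_apply, Finset.mul_sum]
    rw [Finset.sum_comm]
    refine Finset.sum_congr rfl fun j _ => ?_
    exact Finset.sum_congr rfl fun i _ => by ring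
  have hsum : (∑ j, (xk j - xdag j) *
      ((∑ i ∈ τ, η i * f xk i) / S * (∑ i ∈ τ, η i * J xk i j))) = N / S * T := by
    rw [hNf, hTj, Finset.mul_sum]
    exact Finset.sum_congr rfl fun j _ => by ring
  rw [hsum]
  have hL : -4 * (N / S * T) = -4 * (N * T) / S := by
    rw [div_mul_eq_mul_div, ← mul_div_assoc]
  rw [hL, div_le_div_iff₀ hSpos hSpos]
  nlinarith [mul_nonneg (mul_nonneg (sub_nonneg.mpr hkey) hN0) hSpos.le]
end

section
/- Let $f$ satisfy the local tangential cone condition with $\xi$ on $\mathcal{D}$, let $f(x^\dagger) = 0$, and suppose $x_k - x^\dagger \in \mathcal{R}(f'(x^\dagger)^T)$. If $\tau_k = \{ i : |f_i(x_k)|^2 \ge \delta_k \|f(x_k)\|^2 \}$ with $\delta_k = \frac{1}{2}\left( \frac{\max_i |f_i(x_k)|^2}{\|f(x_k)\|^2} + \frac{1}{m} \right)$, then $\|f_{\tau_k}(x_k)\|_2^2 \ge \frac{|\tau_k|}{m(1+\xi)^2} \sigma_{\min}^2(f'(x^\dagger)) \|x_k - x^\dagger\|^2$, where $\sigma_{\min}$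 is the smallest nonzero singular value. -/
/-- Lower bound for the greedy (distance-based) index set: if
`τ_k = {i : |f_i(x_k)|² ≥ δ_k ‖f(x_k)‖²}` with
`δ_k = (max_i |f_i(x_k)|²/‖f(x_k)‖² + 1/m)/2`, `f(x†)=0`,
`x_k - x† ∈ R(f'(x†)^T)`, and `σ > 0` satisfies
`‖f'(x†)v‖ ≥ σ‖v‖` on `R(f'(x†)^T)`, then
`‖f_{τ_k}(x_k)‖₂² ≥ (|τ_k|/(m(1+ξ)²)) σ² ‖x_k - x†‖²`. -/
theorem stmt_14 {n m : ℕ} (hm : 0 < m) (D : Set (Fin n → ℝ))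
    (f : (Fin n → ℝ) → Fin m → ℝ)
    (J : (Fin n → ℝ) → Matrix (Fin m) (Fin n) ℝ)
    (hdiff : ∀ x ∈ D, HasFDerivAt f (Matrix.mulVecLin (J x)).toContinuousLinearMap x)
    (ξ : ℝ) (hξ0 : 0 ≤ ξ)
    (hcone : ∀ x1 ∈ D, ∀ x2 ∈ D, ∀ i : Fin m,
      |f x1 i - f x2 i - (J x1).mulVec (x1 - x2) i| ≤ ξ * |f x1 i - f x2 i|)
    (xdag : Fin n → ℝ) (hxdag : xdag ∈ D) (hfdag : f xdag = 0)
    (xk : Fin n → ℝ) (hxk : xk ∈ D)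
    (hrange : ∃ u : Fin m → ℝ, xk - xdag = (J xdag).transpose.mulVec u)
    (σ : ℝ) (hσ : 0 ≤ σ)
    (hσmin : ∀ v : Fin n → ℝ, (∃ u : Fin m → ℝ, v = (J xdag).transpose.mulVec u) →
      ∑ i, ((J xdag).mulVec v i) ^ 2 ≥ σ ^ 2 * ∑ j, v j ^ 2)
    (δ : ℝ)
    (hδ : δ = (1 / 2) *
      ((Finset.univ.sup' ⟨(⟨0, hm⟩ : Fin m), Finset.mem_univ _⟩
          fun i => f xk i ^ 2) / (∑ i, f xk i ^ 2) + 1 / (m : ℝ)))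
    (τ : Finset (Fin m))
    (hτ : ∀ i : Fin m, i ∈ τ ↔ f xk i ^ 2 ≥ δ * ∑ j, f xk j ^ 2) :
    ∑ i ∈ τ, f xk i ^ 2 ≥
      ((τ.card : ℝ) / (m * (1 + ξ) ^ 2)) * σ ^ 2 * ∑ j, (xk j - xdag j) ^ 2 := by
  classical
  set S : ℝ := ∑ i, f xk i ^ 2 with hS
  set V : ℝ := ∑ j, (xk j - xdag j) ^ 2 with hV
  have hS0 : 0 ≤ S := Finset.sum_nonneg fun i _ => sq_nonneg _
  have hV0 : 0 ≤ V := Finset.sum_nonneg fun j _ => sq_nonneg _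
  -- tangential cone at xdag
  have hcone' : ∀ i, |(J xdag).mulVec (xk - xdag) i| ≤ (1 + ξ) * |f xk i| := by
    intro i
    have h := hcone xdag hxdag xk hxk i
    rw [hfdag] at h
    have hneg : (J xdag).mulVec (xdag - xk) i = -((J xdag).mulVec (xk - xdag) i) := by
      have : xdag - xk = -(xk - xdag) := by abel
      rw [this, Matrix.mulVec_neg]
      simp
    rw [hneg] at h
    simp only [Pi.zero_apply, zero_sub] at h
    have h2 : |(J xdag).mulVec (xk - xdag) i - f xk i| ≤ ξ * |f xk i| := by
      have : -f xk i - -((J xdag).mulVec (xk - xdag) i)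
          = (J xdag).mulVec (xk - xdag) i - f xk i := by ring
      rw [this] at h
      rwa [abs_neg] at h
    calc |(J xdag).mulVec (xk - xdag) i|
        ≤ |(J xdag).mulVec (xk - xdag) i - f xk i| + |f xk i| := by
          have := abs_sub_abs_le_abs_sub ((J xdag).mulVec (xk - xdag) i) (f xk i)
          linarith [abs_add_le ((J xdag).mulVec (xk - xdag) i - f xk i) (f xk i),
            abs_sub_abs_le_abs_sub ((J xdag).mulVec (xk - xdag) i) (f xk i)]
      _ ≤ ξ * |f xk i| + |f xk i| := by linarith
      _ = (1 + ξ) * |f xk i| := by ring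
  have hJbound : ∑ i, ((J xdag).mulVec (xk - xdag) i) ^ 2 ≤ (1 + ξ) ^ 2 * S := by
    rw [hS, Finset.mul_sum]
    apply Finset.sum_le_sum
    intro i _
    have h := hcone' i
    have : ((J xdag).mulVec (xk - xdag) i) ^ 2 ≤ ((1 + ξ) * |f xk i|) ^ 2 := by
      rw [← sq_abs]
      exact pow_le_pow_left₀ (abs_nonneg _) h 2
    calc ((J xdag).mulVec (xk - xdag) i) ^ 2 ≤ ((1 + ξ) * |f xk i|) ^ 2 := this
      _ = (1 + ξ) ^ 2 * f xk i ^ 2 := by rw [mul_pow, sq_abs]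
  have hσV : σ ^ 2 * V ≤ (1 + ξ) ^ 2 * S := by
    have h := hσmin (xk - xdag) hrange
    have hVeq : ∑ j, (xk - xdag) j ^ 2 = V := by
      rw [hV]; apply Finset.sum_congr rfl; intro j _; simp [Pi.sub_apply]
    rw [hVeq] at h
    linarith
  have hξ1 : (0:ℝ) < (1 + ξ) ^ 2 := by positivity
  have hmpos : (0:ℝ) < m := by exact_mod_cast hm
  by_cases hSz : S = 0
  · -- then σ² V = 0, RHS = 0
    have hσVz : σ ^ 2 * V = 0 := by
      have h1 : σ ^ 2 * V ≤ 0 := by rw [hSz] at hσV; linarith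
      have h2 : 0 ≤ σ ^ 2 * V := mul_nonneg (sq_nonneg _) hV0
      linarith
    have : ((τ.card : ℝ) / (m * (1 + ξ) ^ 2)) * σ ^ 2 * V = 0 := by
      rw [mul_assoc, hσVz, mul_zero]
    rw [this]
    exact Finset.sum_nonneg fun i _ => sq_nonneg _
  · have hSpos : 0 < S := lt_of_le_of_ne hS0 (Ne.symm hSz)
    set M : ℝ := Finset.univ.sup' ⟨(⟨0, hm⟩ : Fin m), Finset.mem_univ _⟩
        (fun i => f xk i ^ 2) with hM
    have hMS : S ≤ m * M := by
      have : S ≤ ∑ _i : Fin m, M :=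
        Finset.sum_le_sum fun i _ => Finset.le_sup' (fun i => f xk i ^ 2) (Finset.mem_univ i)
      simpa using this
    have hδm : 1 / (m : ℝ) ≤ δ := by
      rw [hδ]
      have : 1 / (m : ℝ) ≤ M / S := by
        rw [div_le_div_iff₀ hmpos hSpos]
        linarith
      linarith
    have hLB : (τ.card : ℝ) * (δ * S) ≤ ∑ i ∈ τ, f xk i ^ 2 := by
      have : ∑ _i ∈ τ, (δ * S) ≤ ∑ i ∈ τ, f xk i ^ 2 :=
        Finset.sum_le_sum fun i hi => (hτ i).1 hi
      simpa using this
    have hcard0 : (0:ℝ) ≤ (τ.card : ℝ) := Nat.cast_nonneg _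
    rw [ge_iff_le, mul_assoc, div_mul_eq_mul_div, div_le_iff₀ (by positivity)]
    have key : (τ.card : ℝ) * (σ ^ 2 * V) ≤ (τ.card : ℝ) * ((1 + ξ) ^ 2 * S) :=
      mul_le_mul_of_nonneg_left hσV hcard0
    have key2 : (τ.card : ℝ) * ((1 + ξ) ^ 2 * S) ≤ (τ.card : ℝ) * (δ * S) * (m * (1 + ξ) ^ 2) := by
      have hδS : (1:ℝ) * ((1 + ξ) ^ 2 * S) ≤ (δ * S) * (m * (1 + ξ) ^ 2) := by
        have : (1:ℝ) / m * S * (m * (1 + ξ) ^ 2) = (1 + ξ) ^ 2 * S := by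
          field_simp
        nlinarith [mul_le_mul_of_nonneg_right (mul_le_mul_of_nonneg_right hδm hS0)
          (le_of_lt (by positivity : (0:ℝ) < m * (1 + ξ) ^ 2))]
      nlinarith
    calc (τ.card : ℝ) * (σ ^ 2 * V) ≤ (τ.card : ℝ) * (δ * S) * (m * (1 + ξ) ^ 2) :=
          le_trans key key2
      _ ≤ (∑ i ∈ τ, f xk i ^ 2) * (m * (1 + ξ) ^ 2) :=
          mul_le_mul_of_nonneg_right hLB (by positivity)
end

section
/- Let $f$ satisfy the local tangential cone condition with $\xi$, let $f(x^\dagger) = 0$, and suppose $x_k - x^\dagger \in \mathcal{R}(f'(x^\dagger)^T)$. If $\tau_k = \{ i : |f_i(x_k)|^2 \ge \rho \max_{j} |f_j(x_k)|^2 \}$ for $\rho \in (0,1]$, then $\|f_{\tau_k}(x_k)\|_2^2 \ge \frac{|\tau_k| \rho}{m(1+\xi)^2} \sigma_{\min}^2(f'(x^\dagger)) \|x_k - x^\dagger\|^2$. -/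
/-- Lower bound for the maximum-residual greedy index set: if
`τ_k = {i : |f_i(x_k)|² ≥ ρ max_j |f_j(x_k)|²}` with `ρ ∈ (0,1]`, `f(x†)=0`,
`x_k - x† ∈ R(f'(x†)^T)`, and `σ ≥ 0` satisfies `‖f'(x†)v‖ ≥ σ‖v‖` on
`R(f'(x†)^T)`, then
`‖f_{τ_k}(x_k)‖₂² ≥ (|τ_k|ρ/(m(1+ξ)²)) σ² ‖x_k - x†‖²`. -/
theorem stmt_15 {n m : ℕ} (hm : 0 < m) (D : Set (Fin n → ℝ))
    (f : (Fin n → ℝ) → Fin m → ℝ)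
    (J : (Fin n → ℝ) → Matrix (Fin m) (Fin n) ℝ)
    (hdiff : ∀ x ∈ D, HasFDerivAt f (Matrix.mulVecLin (J x)).toContinuousLinearMap x)
    (ξ : ℝ) (hξ0 : 0 ≤ ξ)
    (hcone : ∀ x1 ∈ D, ∀ x2 ∈ D, ∀ i : Fin m,
      |f x1 i - f x2 i - (J x1).mulVec (x1 - x2) i| ≤ ξ * |f x1 i - f x2 i|)
    (xdag : Fin n → ℝ) (hxdag : xdag ∈ D) (hfdag : f xdag = 0)
    (xk : Fin n → ℝ) (hxk : xk ∈ D)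
    (hrange : ∃ u : Fin m → ℝ, xk - xdag = (J xdag).transpose.mulVec u)
    (σ : ℝ) (hσ : 0 ≤ σ)
    (hσmin : ∀ v : Fin n → ℝ, (∃ u : Fin m → ℝ, v = (J xdag).transpose.mulVec u) →
      ∑ i, ((J xdag).mulVec v i) ^ 2 ≥ σ ^ 2 * ∑ j, v j ^ 2)
    (ρ : ℝ) (hρ0 : 0 < ρ) (hρ1 : ρ ≤ 1)
    (τ : Finset (Fin m))
    (hτ : ∀ i : Fin m, i ∈ τ ↔ f xk i ^ 2 ≥
      ρ * Finset.univ.sup' ⟨(⟨0, hm⟩ : Fin m), Finset.mem_univ _⟩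
        fun j => f xk j ^ 2) :
    ∑ i ∈ τ, f xk i ^ 2 ≥
      ((τ.card : ℝ) * ρ / (m * (1 + ξ) ^ 2)) * σ ^ 2 *
        ∑ j, (xk j - xdag j) ^ 2 := by
  set v : Fin n → ℝ := xk - xdag with hv
  have hvsum : ∑ j, (xk j - xdag j) ^ 2 = ∑ j, v j ^ 2 := by
    simp [hv]
  set S := ∑ j, f xk j ^ 2 with hSdef
  set M := Finset.univ.sup' ⟨(⟨0, hm⟩ : Fin m), Finset.mem_univ _⟩
        (fun j => f xk j ^ 2) with hMdef
  -- componentwise cone bound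
  have hcomp : ∀ i, ((J xdag).mulVec v i) ^ 2 ≤ (1 + ξ) ^ 2 * f xk i ^ 2 := by
    intro i
    have h := hcone xdag hxdag xk hxk i
    rw [hfdag] at h
    simp only [Pi.zero_apply, zero_sub] at h
    have hmv : (J xdag).mulVec (xdag - xk) i = - (J xdag).mulVec v i := by
      have hsub : xdag - xk = -v := by rw [hv]; abel
      rw [hsub, Matrix.mulVec_neg]
      simp
    rw [hmv, abs_neg] at h
    -- h : |-f xk i - (-(Jv i))| ≤ ξ * |f xk i|
    have h1 : |(J xdag).mulVec v i - f xk i| ≤ ξ * |f xk i| := by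
      have : -f xk i - -((J xdag).mulVec v i) = (J xdag).mulVec v i - f xk i := by ring
      rwa [this] at h
    have h2 : |(J xdag).mulVec v i| ≤ (1 + ξ) * |f xk i| := by
      have := abs_sub_abs_le_abs_sub ((J xdag).mulVec v i) (f xk i)
      linarith
    nlinarith [abs_nonneg ((J xdag).mulVec v i), abs_nonneg (f xk i),
      sq_abs ((J xdag).mulVec v i), sq_abs (f xk i)]
  have hsum : ∑ i, ((J xdag).mulVec v i) ^ 2 ≤ (1 + ξ) ^ 2 * S := by
    rw [hSdef, Finset.mul_sum]
    exact Finset.sum_le_sum fun i _ => hcomp i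
  have hlow : σ ^ 2 * ∑ j, v j ^ 2 ≤ (1 + ξ) ^ 2 * S :=
    le_trans (hσmin v hrange) hsum
  -- max ≥ mean
  have hSM : S ≤ (m : ℝ) * M := by
    have : ∀ j ∈ Finset.univ, f xk j ^ 2 ≤ M := fun j _ =>
      Finset.le_sup' (fun j => f xk j ^ 2) (Finset.mem_univ j)
    calc S ≤ ∑ _j : Fin m, M := Finset.sum_le_sum this
    _ = (m : ℝ) * M := by simp [mul_comm]
  have hτsum : (τ.card : ℝ) * (ρ * M) ≤ ∑ i ∈ τ, f xk i ^ 2 := by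
    calc (τ.card : ℝ) * (ρ * M) = ∑ _i ∈ τ, ρ * M := by
          rw [Finset.sum_const, nsmul_eq_mul]
    _ ≤ ∑ i ∈ τ, f xk i ^ 2 := Finset.sum_le_sum fun i hi => (hτ i).mp hi
  have hM0 : 0 ≤ M := le_trans (sq_nonneg _) (Finset.le_sup' (fun j => f xk j ^ 2) (Finset.mem_univ (⟨0, hm⟩ : Fin m)))
  have hmpos : (0:ℝ) < (m : ℝ) * (1 + ξ) ^ 2 := by positivity
  rw [hvsum, ge_iff_le, div_mul_eq_mul_div, div_mul_eq_mul_div, div_le_iff₀ hmpos]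
  have hSv0 : 0 ≤ σ ^ 2 * ∑ j, v j ^ 2 := by positivity
  have hc0 : (0:ℝ) ≤ (τ.card : ℝ) := Nat.cast_nonneg _
  nlinarith [mul_le_mul_of_nonneg_left hSM (mul_nonneg hc0 hρ0.le),
    mul_le_mul_of_nonneg_left hlow (mul_nonneg hc0 hρ0.le),
    mul_le_mul_of_nonneg_right hτsum (le_of_lt hmpos)]
end

section
/- Suppose nonnegative reals $F_k = \|x_k - x^\dagger\|^2$ satisfy, for constants $\omega \in [0,1)$, $\xi \le 1/2$, $c > 0$: $F_{k+1} \le (1 + 3\omega + 2\omega^2 - (1 - 2\xi + 3\omega - 4\omega\xi) c) F_k + (\omega + 2\omega^2) F_{k-1}$ with $F_1 = F_0$. If $a_1 := 1 + 3\omega + 2\omega^2 - (1-2\xi+3\omega-4\omega\xi)c$ and $a_2 := \omega + 2\omega^2$ satisfy $a_1 + a_2 < 1$ and $a_1 \ge 0$, then $F_{k+1} \le p^k(1 + p - a_1) F_0$ with $p = \frac{a_1 + \sqrt{a_1^2 + 4a_2}}{2} < 1$, hence $F_k \to 0$ geometrically. -/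
/-- Abstract form of the main convergence theorem: if the squared errors
`F_k = ‖x_k - x†‖²` satisfy the momentum recurrence with
`a₁ = 1 + 3ω + 2ω² - (1 - 2ξ + 3ω - 4ωξ)c` and `a₂ = ω + 2ω²` such that
`a₁ ≥ 0` and `a₁ + a₂ < 1`, then `F_{k+1} ≤ p^k (1 + p - a₁) F₀` with
`p = (a₁ + √(a₁² + 4a₂))/2 < 1`. -/
theorem stmt_18 (F : ℕ → ℝ) (ω ξ c a1 a2 p : ℝ)
    (hF : ∀ k, 0 ≤ F k) (h10 : F 1 = F 0)
    (hω0 : 0 ≤ ω) (hω1 : ω < 1) (hξ : ξ ≤ 1 / 2) (hc : 0 < c)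
    (ha1 : a1 = 1 + 3 * ω + 2 * ω ^ 2 - (1 - 2 * ξ + 3 * ω - 4 * ω * ξ) * c)
    (ha2 : a2 = ω + 2 * ω ^ 2)
    (hrec : ∀ k : ℕ, 1 ≤ k → F (k + 1) ≤ a1 * F k + a2 * F (k - 1))
    (hsum : a1 + a2 < 1) (ha1pos : 0 ≤ a1)
    (hp : p = (a1 + Real.sqrt (a1 ^ 2 + 4 * a2)) / 2) :
    p < 1 ∧ ∀ k : ℕ, 1 ≤ k → F (k + 1) ≤ p ^ k * (1 + p - a1) * F 0 := by
  have ha2nn : 0 ≤ a2 := by rw [ha2]; positivity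
  have hdnn : 0 ≤ a1 ^ 2 + 4 * a2 := by positivity
  set s := Real.sqrt (a1 ^ 2 + 4 * a2) with hs
  have hs2 : s ^ 2 = a1 ^ 2 + 4 * a2 := Real.sq_sqrt hdnn
  have hsnn : 0 ≤ s := Real.sqrt_nonneg _
  have hpa1 : a1 ≤ p := by
    have : a1 ≤ s := by nlinarith
    rw [hp]; linarith
  have hpnn : 0 ≤ p := le_trans ha1pos hpa1
  have hquad : p ^ 2 = a1 * p + a2 := by rw [hp]; nlinarith
  have hp1 : p < 1 := by
    have hslt : s < 2 - a1 := by nlinarith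
    rw [hp]; linarith
  refine ⟨hp1, ?_⟩
  have key : ∀ k : ℕ, F (k + 1) + (p - a1) * F k ≤ p ^ k * (1 + p - a1) * F 0 := by
    intro k
    induction k with
    | zero => rw [h10]; ring_nf; simp
    | succ n ih =>
      have hr := hrec (n + 1) (Nat.le_add_left 1 n)
      simp only [Nat.add_sub_cancel] at hr
      have step : F (n + 1 + 1) + (p - a1) * F (n + 1)
          ≤ p * (F (n + 1) + (p - a1) * F n) := by nlinarith [hF n, hF (n+1)]
      calc F (n + 1 + 1) + (p - a1) * F (n + 1)
          ≤ p * (F (n + 1) + (p - a1) * F n) := step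
        _ ≤ p * (p ^ n * (1 + p - a1) * F 0) := by
            exact mul_le_mul_of_nonneg_left ih hpnn
        _ = p ^ (n + 1) * (1 + p - a1) * F 0 := by ring
  intro k _
  have := key k
  nlinarith [hF k, mul_nonneg (sub_nonneg.mpr hpa1) (hF k)]
end
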